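/- arXiv:2203.00932 — 4 statements merged into one kernel-verified Lean document; each statement's English description precedes it below -/
import Mathlib

section
/- For every integer n ≥ 1, the piecewise function vol(t) defined by vol(t) = -(4(4n-1)t² + 12t - 9(2n+1))/(8n(4n+1)) for 0 ≤ t ≤ 3/4, vol(t) = (3-2t)²/(8n) for 3/4 ≤ t ≤ 3/2, and vol(t) = 0 for t ≥ 3/2, satisfies (8n(4n+1)/(9(2n+1))) · ∫₀^∞ vol(t) dt = (3n+1)/(2(2n+1)). -/
open MeasureTheory Set

theorem setIntegral_Ioi_ite_ite {f g : ℝ → ℝ} {a b c : ℝ} (hab : a ≤ b) (hbc : b ≤ c)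
    (hf : IntegrableOn f (Ioc a b)) (hg : IntegrableOn g (Ioc b c)) :
    ∫ t in Ioi a, (if t ≤ b then f t else if t ≤ c then g t else 0) =
      (∫ t in a..b, f t) + ∫ t in b..c, g t := by
  set F : ℝ → ℝ := fun t => if t ≤ b then f t else if t ≤ c then g t else 0
  have hF₁ : EqOn F f (Ioc a b) := fun t ht => if_pos ht.2
  have hF₂ : EqOn F g (Ioc b c) := fun t ht => by simp [F, not_le.2 ht.1, ht.2]
  have hF₃ : EqOn F 0 (Ioi c) := fun t ht => by
    simp [F, not_le.2 (hbc.trans_lt ht), not_le.2 (mem_Ioi.1 ht)]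
  have hi₁ : IntegrableOn F (Ioc a b) := hf.congr_fun hF₁.symm measurableSet_Ioc
  have hi₂ : IntegrableOn F (Ioc b c) := hg.congr_fun hF₂.symm measurableSet_Ioc
  have hi₁₂ : IntegrableOn F (Ioc a c) := Ioc_union_Ioc_eq_Ioc hab hbc ▸ hi₁.union hi₂
  rw [← Ioc_union_Ioi_eq_Ioi (hab.trans hbc),
    setIntegral_union (Ioc_disjoint_Ioi le_rfl) measurableSet_Ioi hi₁₂
      (integrableOn_zero.congr_fun hF₃.symm measurableSet_Ioi),
    ← Ioc_union_Ioc_eq_Ioc hab hbc,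
    setIntegral_union (Ioc_disjoint_Ioc_of_le le_rfl) measurableSet_Ioc hi₁ hi₂,
    setIntegral_congr_fun measurableSet_Ioi hF₃, setIntegral_congr_fun measurableSet_Ioc hF₁,
    setIntegral_congr_fun measurableSet_Ioc hF₂, intervalIntegral.integral_of_le hab,
    intervalIntegral.integral_of_le hbc]
  simp

theorem integral_quadratic (p q r a b : ℝ) :
    ∫ t in a..b, (p * t ^ 2 + q * t + r) =
      p * (b ^ 3 - a ^ 3) / 3 + q * (b ^ 2 - a ^ 2) / 2 + r * (b - a) := by
  have hderiv : ∀ t, HasDerivAt (fun t => p * t ^ 3 / 3 + q * t ^ 2 / 2 + r * t)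
      (p * t ^ 2 + q * t + r) t := fun t => by
    refine (((((hasDerivAt_pow 3 t).const_mul p).div_const 3).add
      (((hasDerivAt_pow 2 t).const_mul q).div_const 2)).add
        ((hasDerivAt_id t).const_mul r)).congr_deriv ?_
    norm_num
    ring
  have hcont : Continuous fun t : ℝ => p * t ^ 2 + q * t + r := by fun_prop
  rw [intervalIntegral.integral_eq_sub_of_hasDerivAt (fun t _ => hderiv t)
    (hcont.intervalIntegrable a b)]
  ring

theorem stmt_0 (n : ℕ) (hn : 1 ≤ n) :
    (8 * (n : ℝ) * (4 * n + 1) / (9 * (2 * n + 1))) *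
      ∫ t in Set.Ioi (0 : ℝ),
        (if t ≤ 3 / 4 then -(4 * (4 * (n : ℝ) - 1) * t ^ 2 + 12 * t - 9 * (2 * n + 1)) / (8 * n * (4 * n + 1))
         else if t ≤ 3 / 2 then (3 - 2 * t) ^ 2 / (8 * n)
         else 0)
      = (3 * n + 1) / (2 * (2 * n + 1)) := by
  have hx : (0 : ℝ) < n := by exact_mod_cast hn
  generalize (n : ℝ) = x at hx ⊢
  have hpiece₁ : ∫ t in (0 : ℝ)..3 / 4,
      -(4 * (4 * x - 1) * t ^ 2 + 12 * t - 9 * (2 * x + 1)) / (8 * x * (4 * x + 1))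
        = (180 * x + 63) / (128 * x * (4 * x + 1)) := by
    simp_rw [intervalIntegral.integral_div,
      show ∀ t, -(4 * (4 * x - 1) * t ^ 2 + 12 * t - 9 * (2 * x + 1))
        = -(4 * (4 * x - 1)) * t ^ 2 + -12 * t + 9 * (2 * x + 1) from fun t => by ring,
      integral_quadratic]
    field_simp
    ring
  have hpiece₂ : ∫ t in (3 / 4 : ℝ)..3 / 2, (3 - 2 * t) ^ 2 / (8 * x) = 9 / (128 * x) := by
    simp_rw [intervalIntegral.integral_div,
      show ∀ t : ℝ, (3 - 2 * t) ^ 2 = 4 * t ^ 2 + -12 * t + 9 from fun t => by ring,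
      integral_quadratic]
    field_simp
    ring
  rw [setIntegral_Ioi_ite_ite (by norm_num) (by norm_num)
    (by fun_prop : Continuous _).integrableOn_Ioc (by fun_prop : Continuous _).integrableOn_Ioc,
    hpiece₁, hpiece₂]
  field_simp
  ring
end

section
/- For every integer n ≥ 2, (16n(4n+1)/(9(2n+1))) · ( ∫₀^{3/(4n)} (1/(2(4n+1)²)) ((1/2 + n)t + 3/4)² dt + ∫_{3/(4n)}^{3/2} (1/(32(2n-1)²)) (3-2t)² dt ) = (8n²+7n+1)/(8n(2n+1)(4n+1)). -/
theorem integral_mul_add_pow {a₁ a₂ b : ℝ} (hb : b ≠ 0) (d : ℝ) (k : ℕ) :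
    ∫ t in a₁..a₂, (b * t + d) ^ k
      = ((b * a₂ + d) ^ (k + 1) - (b * a₁ + d) ^ (k + 1)) / (b * (k + 1)) := by
  rw [intervalIntegral.integral_comp_mul_add (· ^ k) hb, integral_pow, smul_eq_mul]
  field_simp

theorem stmt_3 (n : ℕ) (hn : 2 ≤ n) :
    (16 * (n : ℝ) * (4 * n + 1) / (9 * (2 * n + 1))) *
      ((∫ t in (0 : ℝ)..(3 / (4 * (n : ℝ))),
          (1 / (2 * (4 * (n : ℝ) + 1) ^ 2)) * ((1 / 2 + n) * t + 3 / 4) ^ 2) +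
        ∫ t in (3 / (4 * (n : ℝ)))..(3 / 2),
          (1 / (32 * (2 * (n : ℝ) - 1) ^ 2)) * (3 - 2 * t) ^ 2)
      = (8 * n ^ 2 + 7 * n + 1) / (8 * n * (2 * n + 1) * (4 * n + 1)) := by
  have hx : (2 : ℝ) ≤ n := by exact_mod_cast hn
  -- stated in the normal form `field_simp` puts `2 * n - 1` into, so that it is found
  have h2m1 : (n : ℝ) * 2 - 1 ≠ 0 := by linarith
  have hreflect : ∀ t : ℝ, (3 - 2 * t) ^ 2 = (-2 * t + 3) ^ 2 := fun t => by ring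
  simp only [hreflect, intervalIntegral.integral_const_mul]
  rw [integral_mul_add_pow (by positivity) (3 / 4) 2,
    integral_mul_add_pow (by norm_num) 3 2]
  simp only [Nat.reduceAdd, Nat.cast_ofNat]
  field_simp
  ring
end

section
/- For every integer n ≥ 1, the piecewise function vol(t) defined by vol(t) = 9(2n+1)/(8n(4n+1)) − ((4n+1)/n)t² for 0 ≤ t ≤ 3/(4(4n+1)), vol(t) = (1/n)(3(2n+1)/(2(4n+1)) − t)² for 3/(4(4n+1)) ≤ t ≤ 3(2n+1)/(2(4n+1)), and vol(t) = 0 otherwise, satisfies (8n(4n+1)/(9(2n+1))) · ∫₀^∞ vol(t) dt = (4n+3)/(4(4n+1)). -/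
open MeasureTheory

open Set intervalIntegral Interval in
theorem setIntegral_Ioi_eq_intervalIntegral_of_eq_zero {f : ℝ → ℝ} {a b : ℝ} (hab : a ≤ b)
    (hf : ∀ t, b < t → f t = 0) : ∫ t in Ioi a, f t = ∫ t in a..b, f t := by
  rw [integral_of_le hab]
  exact setIntegral_eq_of_subset_of_forall_sdiff_eq_zero measurableSet_Ioi Ioc_subset_Ioi_self
    fun t ⟨hta, ht⟩ ↦ hf t (not_le.mp fun htb ↦ ht ⟨hta, htb⟩)

open Set intervalIntegral Interval in
theorem intervalIntegral_ite_ite {g h : ℝ → ℝ} {c a b : ℝ} (hca : c ≤ a) (hab : a ≤ b)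
    (hg : IntervalIntegrable g volume c a) (hh : IntervalIntegrable h volume a b) :
    ∫ t in c..b, (if c ≤ t ∧ t ≤ a then g t else if c ≤ t ∧ t ≤ b then h t else 0)
      = (∫ t in c..a, g t) + ∫ t in a..b, h t := by
  set f : ℝ → ℝ := fun t ↦ if c ≤ t ∧ t ≤ a then g t else if c ≤ t ∧ t ≤ b then h t else 0
  have on_first : EqOn f g (Ι c a) := fun t ht ↦ by
    rw [uIoc_of_le hca] at ht
    exact if_pos ⟨ht.1.le, ht.2⟩
  have on_second : EqOn f h (Ι a b) := fun t ht ↦ by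
    rw [uIoc_of_le hab] at ht
    exact (if_neg fun hta : c ≤ t ∧ t ≤ a ↦ ht.1.not_ge hta.2).trans
      (if_pos ⟨hca.trans ht.1.le, ht.2⟩)
  rw [← integral_add_adjacent_intervals ((intervalIntegrable_congr on_first).mpr hg)
      ((intervalIntegrable_congr on_second).mpr hh),
    integral_congr_ae (.of_forall on_first), integral_congr_ae (.of_forall on_second)]

open intervalIntegral in
theorem intervalIntegral_const_sub_mul_sq (C D a : ℝ) :
    ∫ t in (0 : ℝ)..a, C - D * t ^ 2 = C * a - D * (a ^ 3 / 3) := by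
  rw [integral_sub intervalIntegrable_const ((intervalIntegrable_pow 2).const_mul D),
    intervalIntegral.integral_const, intervalIntegral.integral_const_mul, integral_pow, smul_eq_mul]
  ring

open intervalIntegral in
theorem intervalIntegral_mul_sub_sq (c a b : ℝ) :
    ∫ t in a..b, c * (b - t) ^ 2 = c * ((b - a) ^ 3 / 3) := by
  rw [integral_comp_sub_left (fun x ↦ c * x ^ 2), sub_self,
    intervalIntegral.integral_const_mul, integral_pow]
  ring

theorem stmt_13 (n : ℕ) (hn : 1 ≤ n) :
    (8 * (n : ℝ) * (4 * n + 1) / (9 * (2 * n + 1))) *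
      ∫ t in Set.Ioi (0 : ℝ),
        (if 0 ≤ t ∧ t ≤ 3 / (4 * (4 * (n : ℝ) + 1)) then
            9 * (2 * (n : ℝ) + 1) / (8 * n * (4 * n + 1)) - ((4 * n + 1) / n) * t ^ 2
         else if 0 ≤ t ∧ t ≤ 3 * (2 * (n : ℝ) + 1) / (2 * (4 * n + 1)) then
            (1 / (n : ℝ)) * (3 * (2 * n + 1) / (2 * (4 * n + 1)) - t) ^ 2
         else 0)
      = (4 * n + 3) / (4 * (4 * n + 1)) := by
  have hn' : (1 : ℝ) ≤ n := by exact_mod_cast hn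
  have ha : (0 : ℝ) ≤ 3 / (4 * (4 * (n : ℝ) + 1)) := by positivity
  have hab : 3 / (4 * (4 * (n : ℝ) + 1)) ≤ 3 * (2 * (n : ℝ) + 1) / (2 * (4 * n + 1)) := by
    rw [div_le_div_iff₀ (by positivity) (by positivity)]
    nlinarith
  rw [setIntegral_Ioi_eq_intervalIntegral_of_eq_zero (ha.trans hab) fun t ht ↦ by
      simp [(hab.trans_lt ht).not_ge, ht.not_ge],
    intervalIntegral_ite_ite ha hab ((by fun_prop : Continuous _).intervalIntegrable _ _)
      ((by fun_prop : Continuous _).intervalIntegrable _ _),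
    intervalIntegral_const_sub_mul_sq, intervalIntegral_mul_sub_sq]
  field_simp
  ring
end

section
/- For every integer n ≥ 2, with λ = (20n+5)/(20n+4), there is no pair of nonnegative rationals b_i, b_j, μ, b simultaneously satisfying: (i) μ/n + b_i > 1/λ; (ii) (b + n(b_0+b_1) + μ)/(4n+1) < (4n+3)/(4(4n+1)) + ε for sufficiently small ε > 0; (iii) 0 ≤ 3/(4(4n+1)) − b/(4n+1) + b_j(2n+1)/(2(4n+1)) − b_i n/(4n+1) − μ/(4n+1); where {b_0,b_1} = {b_i,b_j}. -/
theorem stmt_16 (n : ℕ) (hn : 2 ≤ n) :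
    ¬ ∃ bi bj μ b : ℚ, 0 ≤ bi ∧ 0 ≤ bj ∧ 0 ≤ μ ∧ 0 ≤ b ∧
      μ / n + bi > (20 * (n : ℚ) + 4) / (20 * n + 5) ∧
      (∀ ε : ℚ, 0 < ε →
        (b + n * (bi + bj) + μ) / (4 * n + 1) < (4 * n + 3) / (4 * (4 * n + 1)) + ε) ∧
      0 ≤ 3 / (4 * (4 * (n : ℚ) + 1)) - b / (4 * n + 1) + bj * (2 * n + 1) / (2 * (4 * n + 1))
          - bi * n / (4 * n + 1) - μ / (4 * n + 1) := by
  rintro ⟨bi, bj, μ, b, hbi, hbj, hμ, hb, h1, h2, h3⟩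
  have hN : (2 : ℚ) ≤ (n : ℚ) := by exact_mod_cast hn
  set N : ℚ := (n : ℚ) with hNdef
  have hNpos : 0 < N := by linarith
  have h4 : (0 : ℚ) < 4 * N + 1 := by linarith
  have h20 : (0 : ℚ) < 20 * N + 5 := by linarith
  -- limit of (ii)
  have h2' : (b + N * (bi + bj) + μ) / (4 * N + 1) ≤ (4 * N + 3) / (4 * (4 * N + 1)) :=
    le_of_forall_pos_le_add (fun ε hε => le_of_lt (h2 ε hε))
  -- clear denominators
  have e1 : (20 * N + 4) * N < (μ + bi * N) * (20 * N + 5) := by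
    have h := mul_lt_mul_of_pos_right h1 (mul_pos hNpos h20)
    have l : (20 * N + 4) / (20 * N + 5) * (N * (20 * N + 5)) = (20 * N + 4) * N := by
      field_simp
    have r : (μ / N + bi) * (N * (20 * N + 5)) = (μ + bi * N) * (20 * N + 5) := by
      field_simp
    rw [l, r] at h
    exact h
  have e2 : b + N * (bi + bj) + μ ≤ (4 * N + 3) / 4 := by
    have := (div_le_div_iff₀ h4 (by linarith : (0:ℚ) < 4 * (4 * N + 1))).mp h2'
    nlinarith
  have e3 : b + bi * N + μ ≤ 3 / 4 + bj * (2 * N + 1) / 2 := by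
    have key : (3 / (4 * (4 * N + 1)) - b / (4 * N + 1) + bj * (2 * N + 1) / (2 * (4 * N + 1))
        - bi * N / (4 * N + 1) - μ / (4 * N + 1)) * (4 * N + 1)
        = 3 / 4 + bj * (2 * N + 1) / 2 - b - bi * N - μ := by
      field_simp; ring
    nlinarith [mul_nonneg h3 h4.le, key]
  -- combine
  nlinarith [mul_le_mul_of_nonneg_left e2 (by linarith : (0:ℚ) ≤ 2 * N + 1),
    mul_le_mul_of_nonneg_left e3 (by linarith : (0:ℚ) ≤ 2 * N),
    mul_nonneg hb (le_of_lt h20), mul_pos hNpos hNpos, sq_nonneg (N - 2),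
    mul_nonneg (mul_nonneg hb (le_of_lt hNpos)) (le_of_lt hNpos)]
end
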